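/- For every real p with 8 < p < 11, one has ((p-1)(p+2)/p)^{1-1/p} · 4^{1/p}/p < 1. -/

import Mathlib

/-!
Taking logarithms, the claim is `(p - 1) log x + log 4 < p log p` with `x = (p - 1)(p + 2) / p`.
Bounding `log x` and `log 8` by the tangent line of `log` at `p`, and using `x / p = 1 + (p - 2) / p²`,
it reduces to `(5p + 2) / p² < log 2`, which holds for `p ≥ 8` since `42 / 64 < 0.69 < log 2`.
-/

open Real

namespace Real

lemma log_le_log_add_div_sub_one {a b : ℝ} (ha : 0 < a) (hb : 0 < b) :
    log a ≤ log b + a / b - 1 := by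
  have h := log_le_sub_one_of_pos (div_pos ha hb)
  rw [log_div ha.ne' hb.ne'] at h
  linarith

lemma rpow_one_sub_inv_mul_rpow_inv_lt {p x c : ℝ} (hp : 0 < p) (hx : 0 < x) (hc : 0 < c)
    (h : (p - 1) * log x + log c < p * log p) :
    x ^ (1 - 1 / p) * c ^ (1 / p) < p := by
  rw [← log_lt_log_iff (by positivity) hp, log_mul (by positivity) (by positivity),
    log_rpow hx, log_rpow hc]
  have hsum : (1 - 1 / p) * log x + 1 / p * log c = ((p - 1) * log x + log c) / p := by
    field_simp
  rw [hsum, div_lt_iff₀ hp]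
  linarith

lemma five_mul_add_two_div_sq_lt_log_two {p : ℝ} (hp : 8 ≤ p) : (5 * p + 2) / p ^ 2 < log 2 := by
  have h := log_two_gt_d9
  rw [div_lt_iff₀ (by positivity)]
  nlinarith

end Real

lemma sub_one_mul_log_add_log_four_lt {p : ℝ} (hp : 8 ≤ p) :
    (p - 1) * log ((p - 1) * (p + 2) / p) + log 4 < p * log p := by
  have hp0 : 0 < p := by linarith
  have hx := log_le_log_add_div_sub_one
    (div_pos (mul_pos (by linarith) (by linarith)) hp0 : 0 < (p - 1) * (p + 2) / p) hp0
  have h8 := log_le_log_add_div_sub_one (by norm_num : (0 : ℝ) < 8) hp0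
  have hlog4 : log 4 = 2 * log 2 := by
    rw [show (4 : ℝ) = 2 ^ 2 by norm_num, log_pow]; push_cast; ring
  have hlog8 : log 8 = 3 * log 2 := by
    rw [show (8 : ℝ) = 2 ^ 3 by norm_num, log_pow]; push_cast; ring
  have hxp : (p - 1) * (p + 2) / p / p = 1 + (p - 2) / p ^ 2 := by
    field_simp; ring
  have hrat : (p - 1) * ((p - 2) / p ^ 2) + 8 / p - 1 = (5 * p + 2) / p ^ 2 := by
    field_simp; ring
  have hmul := mul_le_mul_of_nonneg_left hx (by linarith : 0 ≤ p - 1)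
  rw [hxp] at hmul
  linarith [five_mul_add_two_div_sq_lt_log_two hp]

theorem stmt11_general (p : ℝ) (hp1 : 8 < p) :
    ((p - 1) * (p + 2) / p) ^ (1 - 1 / p) * 4 ^ (1 / p) / p < 1 := by
  have hp : 0 < p := by linarith
  rw [div_lt_one hp]
  exact rpow_one_sub_inv_mul_rpow_inv_lt hp (div_pos (mul_pos (by linarith) (by linarith)) hp)
    four_pos (sub_one_mul_log_add_log_four_lt hp1.le)

theorem stmt11 (p : ℝ) (hp1 : 8 < p) (hp2 : p < 11) :
    ((p - 1) * (p + 2) / p) ^ (1 - 1 / p) * 4 ^ (1 / p) / p < 1 :=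
  stmt11_general p hp1
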